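/- arXiv:2604.02027 — 2 statements merged into one kernel-verified Lean document; each statement's English description precedes it below -/
import Mathlib

section
/- The minimization of ||B − B^d̃||_F^2 over d̃ ∈ {0,1}^N with Σ_i d̃_i = N − x is equivalent to minimizing d^T Q d over d ∈ {0,1}^N with Σ_i d_i = x, via the bijection d = 1 − d̃, where Q_{ij} = b_i b_j (v_i^T v_j)^2; moreover ||B − B^d̃||_F^2 = (d̃ − 1)^T Q (d̃ − 1). -/
/-!
`B - B^d̃` keeps exactly the terms of `B` with `d̃ᵢ = 0`, so it is `∑ᵢ wᵢ vᵢvᵢᵀ` with `wᵢ = bᵢ (1 - d̃ᵢ)`.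
Expanding the Frobenius norm of a weighted sum of rank-one matrices `vᵢvᵢᵀ` gives the Gram
form `∑ᵢⱼ wᵢ wⱼ (vᵢ ⬝ᵥ vⱼ)²`, i.e. `(d̃ - 1)ᵀ Q (d̃ - 1)`. Since `d̃ - 1 = -d` for `d = 1 - d̃`,
this is `dᵀ Q d`, and `d̃ ↦ 1 - d̃` is an involution of `{0,1}^N` exchanging the cardinality
constraints `N - x` and `x`, so both problems range over the same set of values.
-/

open Matrix Finset

theorem sum_sq_sum_smul_vecMulVec_self {ι κ R : Type*} [Fintype ι] [Fintype κ]
    [CommSemiring R] (w : ι → R) (v : ι → κ → R) :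
    ∑ r, ∑ s, (∑ i, w i • vecMulVec (v i) (v i)) r s ^ 2
      = ∑ i, ∑ j, w i * w j * (v i ⬝ᵥ v j) ^ 2 := by
  calc ∑ r, ∑ s, (∑ i, w i • vecMulVec (v i) (v i)) r s ^ 2
      = ∑ r, ∑ s, ∑ i, ∑ j, w i * (v i r * v i s) * (w j * (v j r * v j s)) := by
        simp only [Matrix.sum_apply, Matrix.smul_apply, vecMulVec_apply, smul_eq_mul, sq,
          sum_mul_sum]
    _ = ∑ i, ∑ j, ∑ r, ∑ s, w i * (v i r * v i s) * (w j * (v j r * v j s)) := by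
        simp only [sum_comm (γ := κ) (α := ι)]
    _ = ∑ i, ∑ j, w i * w j * (v i ⬝ᵥ v j) ^ 2 := by
        simp only [dotProduct, sq, sum_mul_sum]
        simp only [mul_sum]
        refine sum_congr rfl fun i _ => sum_congr rfl fun j _ => ?_
        refine sum_congr rfl fun r _ => sum_congr rfl fun s _ => ?_
        ring

theorem sum_smul_sub_sum_ite_smul {ι R M : Type*} [Fintype ι] [Ring R] [AddCommGroup M]
    [Module R M] (b : ι → R) (A : ι → M) (d : ι → Bool) :
    ∑ i, b i • A i - ∑ i, (if d i then b i else 0) • A i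
      = ∑ i, (b i * (1 - if d i then 1 else 0)) • A i := by
  rw [← sum_sub_distrib]
  refine sum_congr rfl fun i _ => ?_
  cases d i <;> simp

theorem ite_sub_one_eq_neg_ite_not {R : Type*} [Ring R] (c : Bool) :
    (if c then (1 : R) else 0) - 1 = -(if !c then 1 else 0) := by
  cases c <;> simp

theorem card_filter_not_eq {ι : Type*} [Fintype ι] [DecidableEq ι] (d : ι → Bool) :
    #{i | (!d i) = true} = Fintype.card ι - #{i | d i = true} := by
  rw [← card_compl]
  congr 1
  ext i
  simp

theorem minimization_equivalence_general
    (M N x : ℕ) (hx : x ≤ N) (b : Fin N → ℝ)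
    (v : Fin N → (Fin M → ℝ))
    (Q : Matrix (Fin N) (Fin N) ℝ)
    (hQ : ∀ i j, Q i j = b i * b j * (dotProduct (v i) (v j))^2)
    (D : (Fin N → Bool) → ℝ)
    (hD : ∀ dt, D dt = ∑ r, ∑ s,
        ((∑ i, b i • Matrix.vecMulVec (v i) (v i)) r s
          - (∑ i, (if dt i then b i else 0) • Matrix.vecMulVec (v i) (v i)) r s)^2) :
    (∀ dt : Fin N → Bool,
        D dt = ∑ i, ∑ j, ((if dt i then (1:ℝ) else 0) - 1) * Q i j
            * ((if dt j then (1:ℝ) else 0) - 1))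
    ∧ (∀ m : ℝ,
        IsLeast {y | ∃ dt : Fin N → Bool,
            (Finset.univ.filter (fun i => dt i = true)).card = N - x ∧ y = D dt} m
        ↔ IsLeast {y | ∃ d : Fin N → Bool,
            (Finset.univ.filter (fun i => d i = true)).card = x ∧
            y = ∑ i, ∑ j, (if d i then (1:ℝ) else 0) * Q i j
                * (if d j then (1:ℝ) else 0)} m) := by
  have frobenius : ∀ dt : Fin N → Bool, D dt = ∑ i, ∑ j,
      ((if dt i then (1:ℝ) else 0) - 1) * Q i j * ((if dt j then (1:ℝ) else 0) - 1) := by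
    intro dt
    simp only [hD, ← Matrix.sub_apply, sum_smul_sub_sum_ite_smul,
      sum_sq_sum_smul_vecMulVec_self, hQ]
    exact sum_congr rfl fun i _ => sum_congr rfl fun j _ => by ring
  have complement : ∀ dt : Fin N → Bool, D dt = ∑ i, ∑ j,
      (if !dt i then (1:ℝ) else 0) * Q i j * (if !dt j then (1:ℝ) else 0) := by
    intro dt
    simp only [frobenius, ite_sub_one_eq_neg_ite_not, neg_mul, mul_neg, neg_neg]
  refine ⟨frobenius, fun m => ?_⟩
  suffices h : {y | ∃ dt : Fin N → Bool, #{i | dt i = true} = N - x ∧ y = D dt}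
      = {y | ∃ d : Fin N → Bool, #{i | d i = true} = x ∧
          y = ∑ i, ∑ j, (if d i then (1:ℝ) else 0) * Q i j * (if d j then (1:ℝ) else 0)} by
    rw [h]
  ext y
  constructor
  · rintro ⟨dt, hcard, rfl⟩
    refine ⟨(!dt ·), ?_, complement dt⟩
    rw [card_filter_not_eq, hcard, Fintype.card_fin]
    omega
  · rintro ⟨d, hcard, rfl⟩
    refine ⟨(!d ·), ?_, ?_⟩
    · rw [card_filter_not_eq, hcard, Fintype.card_fin]
    · simp only [complement, Bool.not_not]

/-- Minimizing `‖B - B^d̃‖_F²` over binary `d̃` with `∑ d̃ = N - x` is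
equivalent to minimizing `dᵀ Q d` over binary `d` with `∑ d = x`, via `d = 1 - d̃`;
moreover `‖B - B^d̃‖_F² = (d̃ - 1)ᵀ Q (d̃ - 1)`. -/
theorem minimization_equivalence
    (M N x : ℕ) (hx : x ≤ N) (b : Fin N → ℝ) (hb : ∀ i, 0 < b i)
    (v : Fin N → (Fin M → ℝ))
    (Q : Matrix (Fin N) (Fin N) ℝ)
    (hQ : ∀ i j, Q i j = b i * b j * (dotProduct (v i) (v j))^2)
    (D : (Fin N → Bool) → ℝ)
    (hD : ∀ dt, D dt = ∑ r, ∑ s,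
        ((∑ i, b i • Matrix.vecMulVec (v i) (v i)) r s
          - (∑ i, (if dt i then b i else 0) • Matrix.vecMulVec (v i) (v i)) r s)^2) :
    (∀ dt : Fin N → Bool,
        D dt = ∑ i, ∑ j, ((if dt i then (1:ℝ) else 0) - 1) * Q i j
            * ((if dt j then (1:ℝ) else 0) - 1))
    ∧ (∀ m : ℝ,
        IsLeast {y | ∃ dt : Fin N → Bool,
            (Finset.univ.filter (fun i => dt i = true)).card = N - x ∧ y = D dt} m
        ↔ IsLeast {y | ∃ d : Fin N → Bool,
            (Finset.univ.filter (fun i => d i = true)).card = x ∧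
            y = ∑ i, ∑ j, (if d i then (1:ℝ) else 0) * Q i j
                * (if d j then (1:ℝ) else 0)} m) :=
  minimization_equivalence_general M N x hx b v Q hQ D hD
end

section
/- Let P_s and P_0 be reflections (P² = 1, P = P†, each fixing a codimension-1 subspace) and let U be unitary with U|0⟩ = √p |s⟩ + √(1−p)|f⟩ where P_s|s⟩ = −|s⟩, P_s|f⟩ = |f⟩, P_0 = 1 − 2|0⟩⟨0|, 0 < p < 1. Then the operator Q = −U P_0 U† P_s restricted to the 2-dimensional invariant subspace spanned by U|0⟩ and P_s U|0⟩ has eigenvalues e^{±2i arcsin√p}. -/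
/-!
On the plane spanned by the orthonormal vectors `s` and `f`, write `U|0⟩ = sin θ s + cos θ f`
with `θ = arcsin √p`. Since `U` is unitary, `U P₀ U†` is the reflection `1 - 2|ψ⟩⟨ψ|` in
`ψ = U|0⟩`, so `Q` is a product of two reflections of that plane, i.e. the rotation by `2θ`.
Its eigenvectors are `s ± i f`, with eigenvalues `(cos θ ± i sin θ)² = e^{±2iθ}`, and `s`, `f`
are recovered from `ψ ∓ P_s ψ`.
-/

open Matrix Complex

theorem Matrix.mul_sub_two_smul_vecMulVec_mul_conjTranspose {R n : Type*} [CommRing R]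
    [StarRing R] [Fintype n] [DecidableEq n] {U : Matrix n n R} (hU : U * Uᴴ = 1) (z : n → R) :
    U * (1 - (2 : R) • vecMulVec z (star z)) * Uᴴ
      = 1 - (2 : R) • vecMulVec (U *ᵥ z) (star (U *ᵥ z)) := by
  rw [mul_sub, sub_mul, mul_one, hU, Matrix.mul_smul, Matrix.smul_mul, mul_vecMulVec,
    vecMulVec_mul, star_mulVec]

theorem Complex.star_dotProduct_self_eq_sum_normSq {n : Type*} [Fintype n] (v : n → ℂ) :
    star v ⬝ᵥ v = ((∑ k, normSq (v k) : ℝ) : ℂ) := by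
  simp [dotProduct, normSq_eq_conj_mul_self]

theorem add_smul_ne_zero_of_orthonormal {R n : Type*} [CommRing R] [StarRing R] [Nontrivial R]
    [Fintype n] {s f : n → R} (hss : star s ⬝ᵥ s = 1) (hsf : star s ⬝ᵥ f = 0) (c : R) :
    s + c • f ≠ 0 := by
  intro h
  have := congrArg (star s ⬝ᵥ ·) h
  simp [dotProduct_add, dotProduct_smul, hss, hsf] at this

theorem span_pair_le_span_pair_mulVec {K n : Type*} [Field K] [NeZero (2 : K)] [Fintype n]
    {P : Matrix n n K} {s f : n → K} (hPs : P *ᵥ s = -s) (hPf : P *ᵥ f = f)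
    {a b : K} (ha : a ≠ 0) (hb : b ≠ 0) :
    Submodule.span K {s, f} ≤ Submodule.span K {a • s + b • f, P *ᵥ (a • s + b • f)} := by
  set ψ := a • s + b • f
  have hPψ : P *ᵥ ψ = -(a • s) + b • f := by
    rw [mulVec_add, mulVec_smul, mulVec_smul, hPs, hPf, smul_neg]
  have hψ : ψ ∈ Submodule.span K {ψ, P *ᵥ ψ} := Submodule.subset_span (by simp)
  have hPψ' : P *ᵥ ψ ∈ Submodule.span K {ψ, P *ᵥ ψ} := Submodule.subset_span (by simp)
  rw [Submodule.span_le, Set.insert_subset_iff, Set.singleton_subset_iff]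
  constructor
  · rw [SetLike.mem_coe, ← Submodule.smul_mem_iff _ (mul_ne_zero two_ne_zero ha)]
    convert Submodule.sub_mem _ hψ hPψ' using 1
    rw [hPψ]
    module
  · rw [SetLike.mem_coe, ← Submodule.smul_mem_iff _ (mul_ne_zero two_ne_zero hb)]
    convert Submodule.add_mem _ hψ hPψ' using 1
    rw [hPψ]
    module

theorem neg_householder_mul_mulVec_add_I_smul {n : Type*} [Fintype n] [DecidableEq n]
    {P : Matrix n n ℂ} {s f : n → ℂ}
    (hss : star s ⬝ᵥ s = 1) (hff : star f ⬝ᵥ f = 1) (hsf : star s ⬝ᵥ f = 0)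
    (hPs : P *ᵥ s = -s) (hPf : P *ᵥ f = f)
    {a b : ℂ} (ha : star a = a) (hb : star b = b) (hab : a ^ 2 + b ^ 2 = 1) :
    -((1 - (2 : ℂ) • vecMulVec (a • s + b • f) (star (a • s + b • f))) * P) *ᵥ (s + I • f)
      = (b + I * a) ^ 2 • (s + I • f) := by
  have hfs : star f ⬝ᵥ s = 0 := by rw [star_dotProduct, hsf, star_zero]
  have hPw : P *ᵥ (s + I • f) = -s + I • f := by
    rw [mulVec_add, mulVec_smul, hPs, hPf]
  have hdot : star (a • s + b • f) ⬝ᵥ (-s + I • f) = -a + I * b := by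
    simp only [star_add, star_smul, ha, hb, add_dotProduct, smul_dotProduct, dotProduct_add,
      dotProduct_neg, dotProduct_smul, hss, hff, hsf, hfs, smul_eq_mul]
    ring
  rw [neg_mulVec, ← mulVec_mulVec, hPw, sub_mulVec, one_mulVec, smul_mulVec, vecMulVec_mulVec,
    op_smul_eq_smul, hdot]
  match_scalars
  · linear_combination -hab - a ^ 2 * I_sq
  · linear_combination I * hab - (a ^ 2 * I + 2 * a * b) * I_sq

theorem Complex.exp_two_mul_I_mul (x : ℂ) : exp (2 * I * x) = (cos x + I * sin x) ^ 2 := by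
  rw [mul_comm I (sin x), ← exp_mul_I, ← exp_nat_mul]
  congr 1
  push_cast
  ring

theorem neg_householder_mul_mulVec_add_I_smul_eq_exp {n : Type*} [Fintype n] [DecidableEq n]
    {P : Matrix n n ℂ} {s f : n → ℂ}
    (hss : star s ⬝ᵥ s = 1) (hff : star f ⬝ᵥ f = 1) (hsf : star s ⬝ᵥ f = 0)
    (hPs : P *ᵥ s = -s) (hPf : P *ᵥ f = f) (θ : ℝ) :
    -((1 - (2 : ℂ) • vecMulVec (sin θ • s + cos θ • f) (star (sin θ • s + cos θ • f))) * P)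
      *ᵥ (s + I • f) = exp (2 * I * θ) • (s + I • f) := by
  rw [exp_two_mul_I_mul]
  refine neg_householder_mul_mulVec_add_I_smul hss hff hsf hPs hPf ?_ ?_ (sin_sq_add_cos_sq _)
  · rw [← ofReal_sin]; exact conj_ofReal _
  · rw [← ofReal_cos]; exact conj_ofReal _

theorem grover_operator_eigenvalues_general
    {n : Type*} [Fintype n] [DecidableEq n]
    (U Ps P0 Q : Matrix n n ℂ)
    (hUU : U ∈ Matrix.unitaryGroup n ℂ)
    (z s f : n → ℂ)
    (hs : ∑ k, Complex.normSq (s k) = 1)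
    (hf : ∑ k, Complex.normSq (f k) = 1)
    (hsf : ∑ k, (starRingEnd ℂ) (s k) * f k = 0)
    (hP0 : P0 = 1 - (2:ℂ) • Matrix.vecMulVec z (star z))
    (hPss : Ps.mulVec s = -s) (hPsf : Ps.mulVec f = f)
    (p : ℝ) (hp0 : 0 < p) (hp1 : p < 1)
    (hUz : U.mulVec z = (Real.sqrt p : ℂ) • s + (Real.sqrt (1 - p) : ℂ) • f)
    (hQ : Q = -(U * P0 * U.conjTranspose * Ps)) :
    ∃ wp wm : n → ℂ, wp ≠ 0 ∧ wm ≠ 0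
      ∧ wp ∈ Submodule.span ℂ
          ({U.mulVec z, Ps.mulVec (U.mulVec z)} : Set (n → ℂ))
      ∧ wm ∈ Submodule.span ℂ
          ({U.mulVec z, Ps.mulVec (U.mulVec z)} : Set (n → ℂ))
      ∧ Q.mulVec wp
          = Complex.exp (2 * Complex.I * (Real.arcsin (Real.sqrt p) : ℝ)) • wp
      ∧ Q.mulVec wm
          = Complex.exp (-(2 * Complex.I * (Real.arcsin (Real.sqrt p) : ℝ))) • wm := by
  set θ := Real.arcsin (Real.sqrt p)
  have hsin : Real.sqrt p = Real.sin θ :=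
    (Real.sin_arcsin (by linarith [Real.sqrt_nonneg p]) (Real.sqrt_le_one.mpr hp1.le)).symm
  have hcos : Real.sqrt (1 - p) = Real.cos θ := by rw [Real.cos_arcsin, Real.sq_sqrt hp0.le]
  have hψ : U *ᵥ z = sin θ • s + cos θ • f := by rw [hUz, hsin, hcos, ofReal_sin, ofReal_cos]
  have hsin0 : sin θ ≠ 0 := by
    rw [← ofReal_sin, ← hsin, ofReal_ne_zero]; positivity
  have hcos0 : cos θ ≠ 0 := by
    rw [← ofReal_cos, ← hcos, ofReal_ne_zero, Real.sqrt_ne_zero']; linarith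
  have hQ' : Q = -((1 - (2 : ℂ) • vecMulVec (U *ᵥ z) (star (U *ᵥ z))) * Ps) := by
    rw [hQ, hP0, mul_sub_two_smul_vecMulVec_mul_conjTranspose (mem_unitaryGroup_iff.mp hUU)]
  have hss : star s ⬝ᵥ s = 1 := by rw [star_dotProduct_self_eq_sum_normSq, hs, ofReal_one]
  have hff : star f ⬝ᵥ f = 1 := by rw [star_dotProduct_self_eq_sum_normSq, hf, ofReal_one]
  have hspan := span_pair_le_span_pair_mulVec hPss hPsf hsin0 hcos0
  rw [hQ', hψ]
  refine ⟨s + I • f, -s + I • f, add_smul_ne_zero_of_orthonormal hss hsf I,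
    add_smul_ne_zero_of_orthonormal (by simpa) (by simpa) I,
    hspan (Submodule.mem_span_pair.mpr ⟨1, I, by rw [one_smul]⟩),
    hspan (Submodule.mem_span_pair.mpr ⟨-1, I, by rw [neg_one_smul]⟩),
    neg_householder_mul_mulVec_add_I_smul_eq_exp hss hff hsf hPss hPsf θ, ?_⟩
  -- `U z = sin (-θ) • (-s) + cos (-θ) • f`, so the same computation applies to `-s` and `-θ`.
  have h := neg_householder_mul_mulVec_add_I_smul_eq_exp (s := -s) (by simpa) hff (by simpa)
    (by rw [mulVec_neg, hPss]) hPsf (-θ)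
  rwa [ofReal_neg, sin_neg, cos_neg, neg_smul_neg, mul_neg] at h

/-- Amplitude-estimation setting. With reflections `P_s` (negating the
success state `|s⟩` and fixing `|f⟩`) and `P_0 = 1 - 2|0⟩⟨0|`, a unitary `U` with
`U|0⟩ = √p |s⟩ + √(1-p)|f⟩` and `0 < p < 1`, the Grover-type operator
`Q = -U P_0 U† P_s` has, on the 2-dimensional invariant subspace spanned by `U|0⟩`
and `P_s U|0⟩`, the eigenvalues `e^{±2i·arcsin √p}`. -/
theorem grover_operator_eigenvalues
    {n : Type*} [Fintype n] [DecidableEq n]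
    (U Ps P0 Q : Matrix n n ℂ)
    (hUU : U ∈ Matrix.unitaryGroup n ℂ)
    (hPs2 : Ps * Ps = 1) (hPsH : Ps.conjTranspose = Ps)
    (z s f : n → ℂ)
    (hz : ∑ k, Complex.normSq (z k) = 1)
    (hs : ∑ k, Complex.normSq (s k) = 1)
    (hf : ∑ k, Complex.normSq (f k) = 1)
    (hsf : ∑ k, (starRingEnd ℂ) (s k) * f k = 0)
    (hP0 : P0 = 1 - (2:ℂ) • Matrix.vecMulVec z (star z))
    (hPss : Ps.mulVec s = -s) (hPsf : Ps.mulVec f = f)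
    (p : ℝ) (hp0 : 0 < p) (hp1 : p < 1)
    (hUz : U.mulVec z = (Real.sqrt p : ℂ) • s + (Real.sqrt (1 - p) : ℂ) • f)
    (hQ : Q = -(U * P0 * U.conjTranspose * Ps)) :
    ∃ wp wm : n → ℂ, wp ≠ 0 ∧ wm ≠ 0
      ∧ wp ∈ Submodule.span ℂ
          ({U.mulVec z, Ps.mulVec (U.mulVec z)} : Set (n → ℂ))
      ∧ wm ∈ Submodule.span ℂ
          ({U.mulVec z, Ps.mulVec (U.mulVec z)} : Set (n → ℂ))
      ∧ Q.mulVec wp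
          = Complex.exp (2 * Complex.I * (Real.arcsin (Real.sqrt p) : ℝ)) • wp
      ∧ Q.mulVec wm
          = Complex.exp (-(2 * Complex.I * (Real.arcsin (Real.sqrt p) : ℝ))) • wm :=
  grover_operator_eigenvalues_general U Ps P0 Q hUU z s f hs hf hsf hP0 hPss hPsf p hp0 hp1 hUz hQ
end
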